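/- arXiv:2410.06132 — 4 statements merged into one kernel-verified Lean document; each statement's English description precedes it below -/
import Mathlib

section
/- For every ε, d₀ > 0 there exists ξ > 0 such that the following holds. Let G be a bipartite graph with parts X and Y whose density d = d_G(X,Y) satisfies d ≥ d₀. If Σ_{x ∈ X} Σ_{x' ∈ X} |N_G(x) ∩ N_G(x')|² ≤ d⁴ |X|² |Y|² + ξ |X|² |Y|², then the pair (X, Y) is ε-regular. -/
/-!
Let `a` be the biadjacency matrix of `(X, Y)`, `m = |X|`, `n = |Y|`. The codegrees of pairs
in `X` sum to `∑_y deg(y)² ≥ d²m²n` (Cauchy–Schwarz), so the 4-cycle bound forces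
`∑_{x,x'} (codeg(x,x') - d²n)² ≤ ξ m²n²`. Counting the same 4-cycles from `Y` bounds the
degree variance `∑_x (deg x - dn)²` in the same way. For `X' ⊆ X`, `Y' ⊆ Y`, Cauchy–Schwarz
over `Y` bounds `(e(X',Y') - d|X'||Y'|)²` by `n ∑_{y ∈ Y} (∑_{x ∈ X'} (a x y - d))²`, which
expands into codegree and degree deviations over `X'`; with `ξ = η⁴` this is at most
`3η m²n²`, and `3η ≤ ε⁶` together with `|X'| ≥ εm`, `|Y'| ≥ εn` gives `|d(X',Y') - d| ≤ ε`.
-/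

open Finset
open scoped Classical

/-- The density of the pair of vertex sets `(A, B)` in the graph `G`:
`e_G(A,B) / (|A| * |B|)`. -/
noncomputable def edgeDensityR {V : Type} (G : SimpleGraph V) (A B : Finset V) : ℝ :=
  (∑ a ∈ A, ((B.filter fun b => G.Adj a b).card : ℝ)) / ((A.card : ℝ) * (B.card : ℝ))

/-- The pair `(A, B)` is `ε`-regular in `G`. -/
noncomputable def IsRegularPair {V : Type} (G : SimpleGraph V) (A B : Finset V) (ε : ℝ) : Prop :=
  ∀ X ⊆ A, ∀ Y ⊆ B, ε * A.card ≤ X.card → ε * B.card ≤ Y.card →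
    |edgeDensityR G X Y - edgeDensityR G A B| ≤ ε

open scoped Matrix

namespace Quasirandom

theorem sum_abs_le_of_card_mul_sum_sq_le {ι : Type*} {u : Finset ι} {f : ι → ℝ} {B : ℝ}
    (hB : 0 ≤ B) (h : #u * ∑ i ∈ u, f i ^ 2 ≤ B ^ 2) : ∑ i ∈ u, |f i| ≤ B := by
  have hCS := sq_sum_le_card_mul_sum_sq (s := u) (f := fun i => |f i|)
  simp only [sq_abs] at hCS
  exact (abs_le_of_sq_le_sq' (hCS.trans h) hB).2

variable {α β : Type*} (a : Matrix α β ℝ) (s : Finset α) (t : Finset β)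

def degree (x : α) : ℝ := ∑ y ∈ t, a x y

def codegree (x x' : α) : ℝ := ∑ y ∈ t, a x y * a x' y

theorem sum_degree_transpose : ∑ y ∈ t, degree aᵀ s y = ∑ x ∈ s, degree a t x :=
  sum_comm

theorem sum_codegree_eq_sum_sq_degree_transpose :
    ∑ x ∈ s, ∑ x' ∈ s, codegree a t x x' = ∑ y ∈ t, degree aᵀ s y ^ 2 := by
  simp only [codegree, degree, sq, sum_mul_sum, Matrix.transpose_apply]
  symm
  rw [sum_comm]
  exact sum_congr rfl fun _ _ => by rw [sum_comm]

theorem sum_sq_codegree_transpose :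
    ∑ y ∈ t, ∑ y' ∈ t, codegree aᵀ s y y' ^ 2 =
      ∑ x ∈ s, ∑ x' ∈ s, codegree a t x x' ^ 2 := by
  simp only [codegree, sq, sum_mul_sum, Matrix.transpose_apply]
  simp_rw [sum_comm (s := t) (t := s)]
  exact sum_congr rfl fun _ _ => sum_congr rfl fun _ _ =>
    sum_congr rfl fun _ _ => sum_congr rfl fun _ _ => by ring

theorem sq_sum_degree_le :
    (∑ x ∈ s, degree a t x) ^ 2 ≤ #t * ∑ x ∈ s, ∑ x' ∈ s, codegree a t x x' := by
  rw [← sum_degree_transpose, sum_codegree_eq_sum_sq_degree_transpose]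
  exact sq_sum_le_card_mul_sum_sq

theorem sum_sq_codegree_sub_le {d ξ : ℝ} (hdeg : ∑ x ∈ s, degree a t x = d * #s * #t)
    (hC4 : ∑ x ∈ s, ∑ x' ∈ s, codegree a t x x' ^ 2 ≤
      d ^ 4 * #s ^ 2 * #t ^ 2 + ξ * #s ^ 2 * #t ^ 2) :
    ∑ x ∈ s, ∑ x' ∈ s, (codegree a t x x' - d ^ 2 * #t) ^ 2 ≤ ξ * #s ^ 2 * #t ^ 2 := by
  have hCS := sq_sum_degree_le a s t
  rw [hdeg] at hCS
  have hexp : ∑ x ∈ s, ∑ x' ∈ s, (codegree a t x x' - d ^ 2 * #t) ^ 2 =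
      ∑ x ∈ s, ∑ x' ∈ s, codegree a t x x' ^ 2
        - 2 * (d ^ 2 * #t) * ∑ x ∈ s, ∑ x' ∈ s, codegree a t x x'
        + #s ^ 2 * (d ^ 2 * #t) ^ 2 := by
    simp only [sub_sq, sum_add_distrib, sum_sub_distrib, ← mul_sum, ← sum_mul, sum_const,
      nsmul_eq_mul]
    ring
  rw [hexp]
  nlinarith [mul_le_mul_of_nonneg_left hCS (sq_nonneg d)]

theorem sum_sq_degree_sub_eq {d : ℝ} (hdeg : ∑ x ∈ s, degree a t x = d * #s * #t) :
    ∑ x ∈ s, (degree a t x - d * #t) ^ 2 =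
      ∑ y ∈ t, ∑ y' ∈ t, (codegree aᵀ s y y' - d ^ 2 * #s) := by
  have h := sum_codegree_eq_sum_sq_degree_transpose aᵀ t s
  rw [Matrix.transpose_transpose] at h
  simp only [sub_sq, sum_add_distrib, sum_sub_distrib, ← mul_sum, ← sum_mul, sum_const,
    nsmul_eq_mul, h, hdeg]
  ring

theorem sum_abs_codegree_sub_le {d η : ℝ} (hdeg : ∑ x ∈ s, degree a t x = d * #s * #t)
    (hC4 : ∑ x ∈ s, ∑ x' ∈ s, codegree a t x x' ^ 2 ≤
      d ^ 4 * #s ^ 2 * #t ^ 2 + η ^ 4 * #s ^ 2 * #t ^ 2) :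
    ∑ x ∈ s, ∑ x' ∈ s, |codegree a t x x' - d ^ 2 * #t| ≤ η ^ 2 * #s ^ 2 * #t := by
  have hsq := sum_sq_codegree_sub_le a s t hdeg hC4
  rw [← sum_product'] at hsq ⊢
  refine sum_abs_le_of_card_mul_sum_sq_le (by positivity) ?_
  calc (#(s ×ˢ s) : ℝ) * _ ≤ #s ^ 2 * (η ^ 4 * #s ^ 2 * #t ^ 2) := by
        rw [card_product, Nat.cast_mul, ← sq]
        exact mul_le_mul_of_nonneg_left hsq (by positivity)
    _ = (η ^ 2 * #s ^ 2 * #t) ^ 2 := by ring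

theorem sum_abs_degree_sub_le {d η : ℝ} (hη : 0 ≤ η)
    (hdeg : ∑ x ∈ s, degree a t x = d * #s * #t)
    (hC4 : ∑ x ∈ s, ∑ x' ∈ s, codegree a t x x' ^ 2 ≤
      d ^ 4 * #s ^ 2 * #t ^ 2 + η ^ 4 * #s ^ 2 * #t ^ 2) :
    ∑ x ∈ s, |degree a t x - d * #t| ≤ η * #s * #t := by
  have hdegT : ∑ y ∈ t, degree aᵀ s y = d * #t * #s := by
    rw [sum_degree_transpose, hdeg]; ring
  have hC4T : ∑ y ∈ t, ∑ y' ∈ t, codegree aᵀ s y y' ^ 2 ≤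
      d ^ 4 * #t ^ 2 * #s ^ 2 + η ^ 4 * #t ^ 2 * #s ^ 2 := by
    rw [sum_sq_codegree_transpose]; linarith
  have hsq : ∑ x ∈ s, (degree a t x - d * #t) ^ 2 ≤ η ^ 2 * #t ^ 2 * #s := by
    rw [sum_sq_degree_sub_eq a s t hdeg]
    refine le_trans ?_ (sum_abs_codegree_sub_le aᵀ t s hdegT hC4T)
    exact sum_le_sum fun _ _ => sum_le_sum fun _ _ => le_abs_self _
  refine sum_abs_le_of_card_mul_sum_sq_le (by positivity) ?_
  calc (#s : ℝ) * _ ≤ #s * (η ^ 2 * #t ^ 2 * #s) :=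
        mul_le_mul_of_nonneg_left hsq (by positivity)
    _ = (η * #s * #t) ^ 2 := by ring

theorem sum_sq_sum_sub_eq (s' : Finset α) (d : ℝ) :
    ∑ y ∈ t, (∑ x ∈ s', (a x y - d)) ^ 2 =
      ∑ x ∈ s', ∑ x' ∈ s', (codegree a t x x' - d ^ 2 * #t)
        - 2 * d * #s' * ∑ x ∈ s', (degree a t x - d * #t) := by
  have hinner : ∀ x x', ∑ y ∈ t, (a x y - d) * (a x' y - d) =
      codegree a t x x' - d * degree a t x - d * degree a t x' + #t * d ^ 2 := fun x x' => by
    simp only [codegree, degree, sub_mul, mul_sub, sum_sub_distrib, ← mul_sum, ← sum_mul,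
      sum_const, nsmul_eq_mul]
    ring
  calc ∑ y ∈ t, (∑ x ∈ s', (a x y - d)) ^ 2
      = ∑ x ∈ s', ∑ x' ∈ s', ∑ y ∈ t, (a x y - d) * (a x' y - d) := by
        simp_rw [sq, sum_mul_sum, sum_comm (s := t) (t := s')]
    _ = _ := by
        simp only [hinner, sum_sub_distrib, sum_add_distrib, ← mul_sum, sum_const, nsmul_eq_mul]
        ring

theorem sq_sum_sub_le_card_mul_sum_sq {s' : Finset α} {t' : Finset β} (ht' : t' ⊆ t)
    (d : ℝ) :
    (∑ x ∈ s', ∑ y ∈ t', a x y - d * #s' * #t') ^ 2 ≤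
      #t * ∑ y ∈ t, (∑ x ∈ s', (a x y - d)) ^ 2 := by
  have hrw : ∑ x ∈ s', ∑ y ∈ t', a x y - d * #s' * #t' =
      ∑ y ∈ t', ∑ x ∈ s', (a x y - d) := by
    simp only [sum_sub_distrib, sum_const, nsmul_eq_mul]
    rw [sum_comm]; ring
  calc _ ≤ #t' * ∑ y ∈ t', (∑ x ∈ s', (a x y - d)) ^ 2 :=
        hrw ▸ sq_sum_le_card_mul_sum_sq
    _ ≤ #t * ∑ y ∈ t, (∑ x ∈ s', (a x y - d)) ^ 2 := by gcongr

theorem sq_sum_sub_le_of_sum_sq_codegree_le {d η : ℝ} (hd : 0 ≤ d) (hη : 0 ≤ η)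
    (hdeg : ∑ x ∈ s, degree a t x = d * #s * #t)
    (hC4 : ∑ x ∈ s, ∑ x' ∈ s, codegree a t x x' ^ 2 ≤
      d ^ 4 * #s ^ 2 * #t ^ 2 + η ^ 4 * #s ^ 2 * #t ^ 2)
    {s' : Finset α} {t' : Finset β} (hs' : s' ⊆ s) (ht' : t' ⊆ t) :
    (∑ x ∈ s', ∑ y ∈ t', a x y - d * #s' * #t') ^ 2 ≤
      (η ^ 2 + 2 * d * η) * #s ^ 2 * #t ^ 2 := by
  have hcod : ∑ x ∈ s', ∑ x' ∈ s', (codegree a t x x' - d ^ 2 * #t) ≤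
      η ^ 2 * #s ^ 2 * #t := by
    refine le_trans ?_ (sum_abs_codegree_sub_le a s t hdeg hC4)
    rw [← sum_product', ← sum_product']
    refine (sum_le_sum fun _ _ => le_abs_self _).trans ?_
    exact sum_le_sum_of_subset_of_nonneg (product_subset_product hs' hs')
      fun _ _ _ => abs_nonneg _
  have hdeg' : -∑ x ∈ s', (degree a t x - d * #t) ≤ η * #s * #t := by
    refine le_trans ?_ (sum_abs_degree_sub_le a s t hη hdeg hC4)
    rw [← sum_neg_distrib]
    refine (sum_le_sum fun _ _ => neg_le_abs _).trans ?_
    exact sum_le_sum_of_subset_of_nonneg hs' fun _ _ _ => abs_nonneg _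
  have hcard : (#s' : ℝ) ≤ #s := by exact_mod_cast card_le_card hs'
  calc _ ≤ #t * ∑ y ∈ t, (∑ x ∈ s', (a x y - d)) ^ 2 :=
        sq_sum_sub_le_card_mul_sum_sq a t ht' d
    _ = #t * (∑ x ∈ s', ∑ x' ∈ s', (codegree a t x x' - d ^ 2 * #t)
        + 2 * d * #s' * -∑ x ∈ s', (degree a t x - d * #t)) := by
      rw [sum_sq_sum_sub_eq]; ring
    _ ≤ #t * (η ^ 2 * #s ^ 2 * #t + 2 * d * #s' * (η * #s * #t)) := by gcongr
    _ ≤ #t * (η ^ 2 * #s ^ 2 * #t + 2 * d * #s * (η * #s * #t)) := by gcongr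
    _ = _ := by ring

theorem edgeDensityR_eq_sum_degree {V : Type} (G : SimpleGraph V) (A B : Finset V) :
    edgeDensityR G A B = (∑ x ∈ A, degree (G.adjMatrix ℝ) B x) / (#A * #B) := by
  simp only [edgeDensityR, degree, SimpleGraph.adjMatrix_apply, natCast_card_filter]

theorem edgeDensityR_le_one {V : Type} (G : SimpleGraph V) (A B : Finset V) :
    edgeDensityR G A B ≤ 1 := by
  refine div_le_one_of_le₀ ?_ (by positivity)
  calc ∑ x ∈ A, (#(B.filter fun y => G.Adj x y) : ℝ) ≤ ∑ x ∈ A, (#B : ℝ) :=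
        sum_le_sum fun _ _ => by exact_mod_cast card_filter_le _ _
    _ = #A * #B := by rw [sum_const, nsmul_eq_mul]

theorem card_pos_of_edgeDensityR_pos {V : Type} {G : SimpleGraph V} {A B : Finset V}
    (h : 0 < edgeDensityR G A B) : (0 : ℝ) < #A ∧ (0 : ℝ) < #B := by
  refine ⟨?_, ?_⟩ <;> refine lt_of_le_of_ne (by positivity) fun h0 => ?_ <;>
    simp [edgeDensityR, ← h0] at h

theorem card_commonNeighbors_eq_codegree {V : Type} [Fintype V] {G : SimpleGraph V}
    {X Y : Finset V} (hdisj : Disjoint X Y)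
    (hbip : ∀ u v : V, G.Adj u v → (u ∈ X ∧ v ∈ Y) ∨ (u ∈ Y ∧ v ∈ X))
    {x : V} (hx : x ∈ X) (x' : V) :
    (#(univ.filter fun v => G.Adj x v ∧ G.Adj x' v) : ℝ) =
      codegree (G.adjMatrix ℝ) Y x x' := by
  have hY : (univ.filter fun v => G.Adj x v ∧ G.Adj x' v) =
      Y.filter fun v => G.Adj x v ∧ G.Adj x' v := by
    ext v
    simp only [mem_filter, mem_univ, true_and]
    refine ⟨fun hv => ⟨?_, hv⟩, And.right⟩
    rcases hbip x v hv.1 with ⟨-, hv⟩ | ⟨hxY, -⟩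
    · exact hv
    · exact absurd hxY (disjoint_left.mp hdisj hx)
  rw [hY, natCast_card_filter]
  simp only [codegree, SimpleGraph.adjMatrix_apply, ite_zero_mul_ite_zero, mul_one]

theorem abs_div_sub_le_of_sq_sub_le {E d ε m n p q : ℝ} (hε : 0 < ε) (hm : 0 < m)
    (hn : 0 < n) (hp : ε * m ≤ p) (hq : ε * n ≤ q)
    (h : (E - d * p * q) ^ 2 ≤ ε ^ 6 * m ^ 2 * n ^ 2) :
    |E / (p * q) - d| ≤ ε := by
  have hpq : 0 < p * q := mul_pos ((mul_pos hε hm).trans_le hp) ((mul_pos hε hn).trans_le hq)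
  have hsq : (E - d * p * q) ^ 2 ≤ (ε * (p * q)) ^ 2 :=
    calc _ ≤ ε ^ 2 * (ε * m) ^ 2 * (ε * n) ^ 2 := by linarith
      _ ≤ ε ^ 2 * p ^ 2 * q ^ 2 := by gcongr
      _ = (ε * (p * q)) ^ 2 := by ring
  rw [div_sub' hpq.ne', abs_div, abs_of_pos hpq, div_le_iff₀ hpq]
  exact abs_le_of_sq_le_sq (by linarith) (by positivity)

end Quasirandom

open Quasirandom in
theorem quasirandomness_implies_regularity (ε d₀ : ℝ) (hε : 0 < ε) (hd₀ : 0 < d₀) :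
    ∃ ξ : ℝ, 0 < ξ ∧
      ∀ (V : Type) [Fintype V] (G : SimpleGraph V) (X Y : Finset V),
        Disjoint X Y → X ∪ Y = univ →
        (∀ u v : V, G.Adj u v → (u ∈ X ∧ v ∈ Y) ∨ (u ∈ Y ∧ v ∈ X)) →
        d₀ ≤ edgeDensityR G X Y →
        (∑ x ∈ X, ∑ x' ∈ X,
            ((univ.filter fun v => G.Adj x v ∧ G.Adj x' v).card : ℝ) ^ 2) ≤
          edgeDensityR G X Y ^ 4 * (X.card : ℝ) ^ 2 * (Y.card : ℝ) ^ 2 +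
            ξ * (X.card : ℝ) ^ 2 * (Y.card : ℝ) ^ 2 →
        IsRegularPair G X Y ε := by
  obtain ⟨η, hη, hη1, hηε⟩ : ∃ η : ℝ, 0 < η ∧ η ≤ 1 ∧ 3 * η ≤ ε ^ 6 :=
    ⟨min 1 (ε ^ 6 / 3), by positivity, min_le_left _ _,
      by linarith [min_le_right 1 (ε ^ 6 / 3)]⟩
  refine ⟨η ^ 4, by positivity,
    fun V _ G X Y hdisj _ hbip hd₀d hC4 X' hX' Y' hY' hX'card hY'card => ?_⟩
  set d := edgeDensityR G X Y with hd
  have hd_pos : 0 < d := hd₀.trans_le hd₀d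
  obtain ⟨hm, hn⟩ := card_pos_of_edgeDensityR_pos hd_pos
  have hdeg : ∑ x ∈ X, degree (G.adjMatrix ℝ) Y x = d * #X * #Y := by
    rw [hd, edgeDensityR_eq_sum_degree]; field_simp
  have hC4' : ∑ x ∈ X, ∑ x' ∈ X, codegree (G.adjMatrix ℝ) Y x x' ^ 2 ≤
      d ^ 4 * #X ^ 2 * #Y ^ 2 + η ^ 4 * #X ^ 2 * #Y ^ 2 := by
    refine le_of_eq_of_le (sum_congr rfl fun x hx => sum_congr rfl fun x' _ => ?_) hC4
    rw [card_commonNeighbors_eq_codegree hdisj hbip hx]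
  have hdisc := sq_sum_sub_le_of_sum_sq_codegree_le _ X Y hd_pos.le hη.le hdeg hC4' hX' hY'
  rw [edgeDensityR_eq_sum_degree]
  have hηd : η ^ 2 + 2 * d * η ≤ ε ^ 6 := by nlinarith [edgeDensityR_le_one G X Y]
  refine abs_div_sub_le_of_sq_sub_le hε hm hn hX'card hY'card (hdisc.trans ?_)
  gcongr
end

section
/- Let k ≥ 2 be an integer and α > 0, and let R be a graph on m vertices with minimum degree at least (1/(k+1) + α/4)m, where m > 4/α. Then the vertex set of R can be partitioned into vertex-disjoint stars of R, each consisting of a center vertex together with at least 1 and at most k leaves, every leaf being adjacent in R to its center. -/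
/-!
Encode a star cover by the map `f` sending each vertex to the center of its star, and take,
among covers whose stars have at most `k` leaves, one with the fewest one-vertex stars. If
`{v}` is such a star, `v` has a neighbour `w` that is not the center of a full star: the full
stars are disjoint sets of `k + 1` vertices, so there are fewer than `deg v` of them. Moving `v`
into a star centered at `w` then removes `{v}` without creating a new one-vertex star: attach
`v` to `w` if `w` is a center; otherwise `w` leaves its star and becomes the center of a star
with leaf `v`, taking its old center along as a second leaf if that center would be left alone.
-/

open Finset
open scoped Classical

namespace CenterMap

variable {V : Type*} [Fintype V] [DecidableEq V]

def leaves (f : V → V) (u : V) : Finset V := univ.filter fun v => v ≠ u ∧ f v = u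

@[simp]
lemma mem_leaves {f : V → V} {u v : V} : v ∈ leaves f u ↔ v ≠ u ∧ f v = u := by
  simp [leaves]

def trivialCenters (f : V → V) : Finset V := univ.filter fun u => f u = u ∧ leaves f u = ∅

@[simp]
lemma mem_trivialCenters {f : V → V} {u : V} :
    u ∈ trivialCenters f ↔ f u = u ∧ leaves f u = ∅ := by
  simp [trivialCenters]

lemma eq_of_mem_trivialCenters {f : V → V} {u x : V} (hu : u ∈ trivialCenters f)
    (hx : f x = u) : x = u := by
  by_contra hxu
  have : x ∈ leaves f u := mem_leaves.2 ⟨hxu, hx⟩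
  simp_all

lemma leaves_eq_empty_of_map_ne {f : V → V} (hf : ∀ v, f (f v) = f v) {w : V} (hw : f w ≠ w) :
    leaves f w = ∅ := by
  ext x
  simp only [mem_leaves, notMem_empty, iff_false, not_and]
  rintro - rfl
  exact hw (hf x)

def IsFull (k : ℕ) (f : V → V) (u : V) : Prop := f u = u ∧ #(leaves f u) = k

lemma card_filter_isFull_mul_le (k : ℕ) (f : V → V) :
    #{u | IsFull k f u} * (k + 1) ≤ Fintype.card V := by
  have hfiber : ∀ u, f u = u → #{x | f x = u} = #(leaves f u) + 1 := by
    intro u hu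
    rw [← card_insert_of_notMem (by simp : u ∉ leaves f u)]
    congr 1
    ext x
    by_cases hx : x = u <;> simp [hx, hu]
  calc #{u | IsFull k f u} * (k + 1) = ∑ u ∈ {u | IsFull k f u}, #{x | f x = u} := by
        rw [card_eq_sum_ones, sum_mul]
        refine sum_congr rfl fun u hu => ?_
        obtain ⟨hfu, hcard⟩ := (mem_filter.1 hu).2
        rw [hfiber u hfu, hcard, one_mul]
    _ ≤ ∑ u, #{x | f x = u} := sum_le_sum_of_subset (filter_subset _ _)
    _ = Fintype.card V := (card_eq_sum_card_fiberwise fun x _ => mem_univ (f x)).symm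

lemma exists_adj_not_isFull {R : SimpleGraph V} {k : ℕ} {v : V}
    (hdeg : Fintype.card V < #{u | R.Adj v u} * (k + 1)) (f : V → V) :
    ∃ w, R.Adj v w ∧ ¬IsFull k f w := by
  by_contra! hfull
  have hsub : #{u | R.Adj v u} ≤ #{u | IsFull k f u} :=
    card_le_card (monotone_filter_right _ fun u _ => hfull u)
  have := Nat.mul_le_mul_right (k + 1) hsub
  have := card_filter_isFull_mul_le k f
  omega

structure IsStarCover (R : SimpleGraph V) (k : ℕ) (f : V → V) : Prop where
  map_map : ∀ v, f (f v) = f v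
  adj : ∀ v, f v ≠ v → R.Adj v (f v)
  card_leaves_le : ∀ u, f u = u → #(leaves f u) ≤ k

lemma isStarCover_id (R : SimpleGraph V) (k : ℕ) : IsStarCover R k id where
  map_map _ := rfl
  adj _ h := absurd rfl h
  card_leaves_le u _ := by
    have : leaves (id : V → V) u = ∅ := by ext; simp
    simp [this]

section Piecewise

variable {f : V → V} {S : Finset V} {w : V}

lemma leaves_piecewise_subset_of_notMem (hw : w ∈ S) {u : V} (hu : u ∉ S) :
    leaves (S.piecewise (fun _ => w) f) u ⊆ leaves f u := by
  intro x hx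
  rw [mem_leaves] at hx ⊢
  by_cases hxS : x ∈ S
  · rw [piecewise_eq_of_mem _ _ _ hxS] at hx
    exact absurd (hx.2 ▸ hw) hu
  · rwa [piecewise_eq_of_notMem _ _ _ hxS] at hx

lemma leaves_piecewise_self_subset :
    leaves (S.piecewise (fun _ => w) f) w ⊆ S.erase w ∪ leaves f w := by
  intro x hx
  rw [mem_leaves] at hx
  by_cases hxS : x ∈ S
  · exact mem_union_left _ (mem_erase.2 ⟨hx.1, hxS⟩)
  · rw [piecewise_eq_of_notMem _ _ _ hxS] at hx
    exact mem_union_right _ (mem_leaves.2 hx)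

/-- `S.piecewise (fun _ => w) f` regroups the vertices of `S` into one star centered at `w`. -/
lemma IsStarCover.piecewise {R : SimpleGraph V} {k : ℕ} (hf : IsStarCover R k f) (hw : w ∈ S)
    (hadj : ∀ x ∈ S, x ≠ w → R.Adj x w) (hclosed : ∀ x ∉ S, f x ∈ S → f x = w)
    (hcard : #(S.erase w) + #(leaves f w) ≤ k) :
    IsStarCover R k (S.piecewise (fun _ => w) f) where
  map_map x := by
    by_cases hx : x ∈ S
    · simp [hx, hw]
    · by_cases hfx : f x ∈ S
      · simp [hx, hclosed x hx hfx, hw]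
      · simp [hx, hfx, hf.map_map]
  adj x := by
    by_cases hx : x ∈ S
    · rw [piecewise_eq_of_mem _ _ _ hx]
      exact fun hxw => hadj x hx (Ne.symm hxw)
    · simpa [hx] using hf.adj x
  card_leaves_le u hu := by
    by_cases huS : u ∈ S
    · obtain rfl : u = w := by simpa [huS] using hu.symm
      calc #(leaves _ u) ≤ #(S.erase u ∪ leaves f u) :=
            card_le_card leaves_piecewise_self_subset
        _ ≤ #(S.erase u) + #(leaves f u) := card_union_le _ _
        _ ≤ k := hcard
    · rw [piecewise_eq_of_notMem _ _ _ huS] at hu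
      exact (card_le_card (leaves_piecewise_subset_of_notMem hw huS)).trans (hf.card_leaves_le u hu)

lemma trivialCenters_piecewise_subset {v : V} (hv : v ∈ S) (hvw : v ≠ w)
    (hkeep : ∀ y ∈ S, f y ∉ S → ∃ z ∉ S, z ≠ f y ∧ f z = f y) :
    trivialCenters (S.piecewise (fun _ => w) f) ⊆ trivialCenters f \ S := by
  intro x hx
  obtain ⟨hgx, hleaves⟩ := mem_trivialCenters.1 hx
  have hxS : x ∉ S := by
    intro hxS
    obtain rfl : x = w := by simpa [hxS] using hgx.symm
    have : v ∈ leaves (S.piecewise (fun _ => x) f) x := by simp [hv, hvw]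
    simp_all
  rw [piecewise_eq_of_notMem _ _ _ hxS] at hgx
  refine mem_sdiff.2
    ⟨mem_trivialCenters.2 ⟨hgx, eq_empty_of_forall_notMem fun y hy => ?_⟩, hxS⟩
  obtain ⟨hyx, rfl⟩ := mem_leaves.1 hy
  have hleaf : ∀ z ∉ S, z ≠ f y → f z = f y → False := fun z hz hzx hfz => by
    have : z ∈ leaves (S.piecewise (fun _ => w) f) (f y) := by simp [hz, hzx, hfz]
    simp_all
  by_cases hyS : y ∈ S
  · obtain ⟨z, hz, hzx, hfz⟩ := hkeep y hyS hxS
    exact hleaf z hz hzx hfz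
  · exact hleaf y hyS hyx rfl

end Piecewise

section Descent

variable {R : SimpleGraph V} {k : ℕ} {f : V → V} {v : V}

lemma IsStarCover.exists_card_trivialCenters_lt_of_piecewise (hf : IsStarCover R k f)
    (hv : v ∈ trivialCenters f) {S : Finset V} {w : V} (hvS : v ∈ S) (hw : w ∈ S)
    (hvw : v ≠ w)
    (hadj : ∀ x ∈ S, x ≠ w → R.Adj x w) (hclosed : ∀ x ∉ S, f x ∈ S → f x = w)
    (hcard : #(S.erase w) + #(leaves f w) ≤ k)
    (hkeep : ∀ y ∈ S, f y ∉ S → ∃ z ∉ S, z ≠ f y ∧ f z = f y) :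
    ∃ g, IsStarCover R k g ∧ #(trivialCenters g) < #(trivialCenters f) := by
  refine ⟨_, hf.piecewise hw hadj hclosed hcard, ?_⟩
  refine (card_le_card (trivialCenters_piecewise_subset hvS hvw hkeep)).trans_lt ?_
  exact card_lt_card
    ((ssubset_iff_of_subset sdiff_subset).2 ⟨v, hv, fun h => (mem_sdiff.1 h).2 hvS⟩)

lemma IsStarCover.exists_card_trivialCenters_lt (hk : 2 ≤ k) (hf : IsStarCover R k f)
    (hv : v ∈ trivialCenters f) {w : V} (hvw : R.Adj v w) (hw : ¬IsFull k f w) :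
    ∃ g, IsStarCover R k g ∧ #(trivialCenters g) < #(trivialCenters f) := by
  have hfv : f v = v := (mem_trivialCenters.1 hv).1
  have hto_v : ∀ x, f x = v → x = v := fun x => eq_of_mem_trivialCenters hv
  by_cases hcenter : f w = w
  · have hlt : #(leaves f w) < k :=
      (hf.card_leaves_le w hcenter).lt_of_ne fun h => hw ⟨hcenter, h⟩
    refine hf.exists_card_trivialCenters_lt_of_piecewise hv (S := {v, w}) (by simp) (by simp)
      hvw.ne ?_ ?_ ?_ ?_ <;> grind
  · have hleaves_w : leaves f w = ∅ := leaves_eq_empty_of_map_ne hf.map_map hcenter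
    have hwc : R.Adj w (f w) := hf.adj w hcenter
    have hcv : f w ≠ v := fun h => hvw.ne' (hto_v w h)
    by_cases hsole : ∀ x, x ≠ f w → f x = f w → x = w
    · have hcw := hwc.symm
      have hfc := hf.map_map w
      refine hf.exists_card_trivialCenters_lt_of_piecewise hv (S := {v, w, f w}) (by simp)
        (by simp) hvw.ne ?_ ?_ ?_ ?_ <;> grind
    · obtain ⟨w', hw'c, hw', hw'w⟩ : ∃ w', w' ≠ f w ∧ f w' = f w ∧ w' ≠ w := by
        simpa using hsole
      refine hf.exists_card_trivialCenters_lt_of_piecewise hv (S := {v, w}) (by simp) (by simp)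
        hvw.ne ?_ ?_ ?_ ?_ <;> grind

end Descent

lemma exists_isStarCover_trivialCenters_eq_empty {R : SimpleGraph V} {k : ℕ} (hk : 2 ≤ k)
    (hdeg : ∀ v, Fintype.card V < #{u | R.Adj v u} * (k + 1)) :
    ∃ f, IsStarCover R k f ∧ trivialCenters f = ∅ := by
  obtain ⟨f, hf, hmin⟩ := ({f | IsStarCover R k f} : Finset (V → V)).exists_min_image
    (fun f => #(trivialCenters f)) ⟨id, by simpa using isStarCover_id R k⟩
  simp only [mem_filter, mem_univ, true_and] at hf hmin
  refine ⟨f, hf, eq_empty_of_forall_notMem fun v hv => ?_⟩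
  obtain ⟨w, hvw, hw⟩ := exists_adj_not_isFull (hdeg v) f
  obtain ⟨g, hg, hlt⟩ := hf.exists_card_trivialCenters_lt hk hv hvw hw
  exact (hmin g hg).not_gt hlt

end CenterMap

theorem star_partition_general (k : ℕ) (hk : 2 ≤ k) (α : ℝ) (hα : 0 < α)
    (V : Type) [Fintype V] [DecidableEq V] (R : SimpleGraph V) (m : ℕ)
    (hm : Fintype.card V = m)
    (hdeg : ∀ v : V,
      (1 / ((k : ℝ) + 1) + α / 4) * m ≤ ((univ.filter fun u => R.Adj v u).card : ℝ)) :
    -- `f` assigns to each vertex the center of its star: centers are the fixed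
    -- points of `f`, every leaf is adjacent to its center, and every center has
    -- at least `1` and at most `k` leaves.
    ∃ f : V → V,
      (∀ v : V, f (f v) = f v) ∧
      (∀ v : V, f v ≠ v → R.Adj v (f v)) ∧
      (∀ u : V, f u = u →
        1 ≤ (univ.filter fun v => v ≠ u ∧ f v = u).card ∧
        (univ.filter fun v => v ≠ u ∧ f v = u).card ≤ k) := by
  have hdeg' : ∀ v, Fintype.card V < #{u | R.Adj v u} * (k + 1) := by
    intro v
    have hm0 : (0 : ℝ) < m := by rw [← hm]; exact_mod_cast Fintype.card_pos_iff.2 ⟨v⟩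
    have hk1 : (0 : ℝ) < k + 1 := by positivity
    rw [hm]
    exact_mod_cast calc
      (m : ℝ) < m + α / 4 * m * (k + 1) := lt_add_of_pos_right _ (by positivity)
      _ = (1 / ((k : ℝ) + 1) + α / 4) * m * (k + 1) := by field_simp
      _ ≤ #{u | R.Adj v u} * (k + 1) := mul_le_mul_of_nonneg_right (hdeg v) hk1.le
  obtain ⟨f, hf, htriv⟩ := CenterMap.exists_isStarCover_trivialCenters_eq_empty hk hdeg'
  refine ⟨f, hf.map_map, hf.adj, fun u hu => ⟨?_, hf.card_leaves_le u hu⟩⟩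
  have hu' : u ∉ CenterMap.trivialCenters f := by simp [htriv]
  exact card_pos.2
    (nonempty_iff_ne_empty.2 fun h => hu' (CenterMap.mem_trivialCenters.2 ⟨hu, h⟩))

theorem star_partition (k : ℕ) (hk : 2 ≤ k) (α : ℝ) (hα : 0 < α)
    (V : Type) [Fintype V] [DecidableEq V] (R : SimpleGraph V) (m : ℕ)
    (hm : Fintype.card V = m) (hmα : 4 / α < (m : ℝ))
    (hdeg : ∀ v : V,
      (1 / ((k : ℝ) + 1) + α / 4) * m ≤ ((univ.filter fun u => R.Adj v u).card : ℝ)) :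
    -- `f` assigns to each vertex the center of its star: centers are the fixed
    -- points of `f`, every leaf is adjacent to its center, and every center has
    -- at least `1` and at most `k` leaves.
    ∃ f : V → V,
      (∀ v : V, f (f v) = f v) ∧
      (∀ v : V, f v ≠ v → R.Adj v (f v)) ∧
      (∀ u : V, f u = u →
        1 ≤ (univ.filter fun v => v ≠ u ∧ f v = u).card ∧
        (univ.filter fun v => v ≠ u ∧ f v = u).card ≤ k) :=
  star_partition_general k hk α hα V R m hm hdeg
end

section
/- Let k ≥ 2 be an integer, α > 0, and m a positive integer with m > 4/α. Let B be a bipartite graph with parts H and U such that every vertex u ∈ U has degree at least (1/(k+1) + α/4)m in B, and such that |U| + 2|H| ≤ m. Then B contains a spanning subgraph in which every vertex of U has degree exactly 1 and every vertex of H has degree at most k − 1. -/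
open Finset
open scoped Classical

/-!
Assign the vertices of `U` greedily, each to a neighbour in `H` that has so far received fewer
than `k - 1` vertices. Such a neighbour always exists: for `u ∈ U` of degree `d` the degree bound
gives `m ≤ (k + 1) d`, which together with `d ≤ |H|` and `|U| + 2|H| ≤ m` yields `|U| ≤ (k - 1) d`;
so if all `d` neighbours were saturated they would already have absorbed at least `|U|` vertices,
more than have been processed.
-/

theorem exists_mapsTo_card_fiber_le {α β : Type*} [Nonempty β] {t : α → Finset β} {c : ℕ}
    (s : Finset α) (h : ∀ a ∈ s, #s ≤ c * #(t a)) :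
    ∃ f : α → β, (∀ a ∈ s, f a ∈ t a) ∧ ∀ b, #{a ∈ s | f a = b} ≤ c := by
  induction s using Finset.induction_on with
  | empty => exact ⟨Classical.arbitrary _, by simp, by simp⟩
  | @insert a s ha ih =>
    obtain ⟨f, hft, hfc⟩ := ih fun x hx =>
      (card_le_card (subset_insert a s)).trans (h x (mem_insert_of_mem hx))
    obtain ⟨b, hb, hbc⟩ : ∃ b ∈ t a, #{x ∈ s | f x = b} < c := by
      by_contra! hfull
      have hsat : c * #(t a) ≤ #s := calc
        c * #(t a) = ∑ _ ∈ t a, c := by rw [sum_const, smul_eq_mul, mul_comm]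
        _ ≤ ∑ b ∈ t a, #{x ∈ s | f x = b} := sum_le_sum hfull
        _ ≤ #s := (sum_card_fiberwise_eq_card_filter s (t a) f).trans_le (card_filter_le _ _)
      have := h a (mem_insert_self a s)
      rw [card_insert_of_notMem ha] at this
      omega
    have hfiber : ∀ b', {x ∈ s | Function.update f a b x = b'} = {x ∈ s | f x = b'} :=
      fun b' => filter_congr fun x hx => by rw [Function.update_of_ne (ne_of_mem_of_not_mem hx ha)]
    refine ⟨Function.update f a b, ?_, fun b' => ?_⟩
    · intro x hx
      rcases eq_or_ne x a with rfl | hxa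
      · simpa using hb
      · rw [Function.update_of_ne hxa]
        exact hft x ((mem_insert.mp hx).resolve_left hxa)
    · rw [filter_insert, hfiber, Function.update_self]
      split_ifs with hbb
      · subst hbb
        exact (card_insert_le _ _).trans hbc
      · exact hfc b'

namespace SimpleGraph

variable {V : Type*} (G : SimpleGraph V) (s : Finset V) (f : V → V)

def assignmentSubgraph : SimpleGraph V :=
  G ⊓ fromRel fun x y => x ∈ s ∧ y = f x

variable {G s f}

theorem assignmentSubgraph_adj {x y : V} :
    (G.assignmentSubgraph s f).Adj x y ↔ G.Adj x y ∧ (x ∈ s ∧ y = f x ∨ y ∈ s ∧ x = f y) := by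
  simp only [assignmentSubgraph, inf_adj, fromRel_adj]
  exact and_congr_right fun h => and_iff_right h.ne

variable [Fintype V]

theorem card_assignmentSubgraph_adj_of_mem (hs : ∀ u ∈ s, ∀ v ∈ s, ¬ G.Adj u v)
    (hf : ∀ u ∈ s, G.Adj u (f u)) {u : V} (hu : u ∈ s) :
    #{w | (G.assignmentSubgraph s f).Adj u w} = 1 := by
  rw [card_eq_one]
  refine ⟨f u, ext fun w => ?_⟩
  simp only [mem_filter, mem_univ, true_and, mem_singleton, assignmentSubgraph_adj]
  constructor
  · rintro ⟨huw, (⟨-, rfl⟩ | ⟨hw, -⟩)⟩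
    · rfl
    · exact absurd huw (hs u hu w hw)
  · rintro rfl
    exact ⟨hf u hu, Or.inl ⟨hu, rfl⟩⟩

theorem card_assignmentSubgraph_adj_le_of_notMem {h : V} (hh : h ∉ s) :
    #{w | (G.assignmentSubgraph s f).Adj h w} ≤ #{x ∈ s | f x = h} := by
  refine card_le_card fun w hw => ?_
  simp only [mem_filter, mem_univ, true_and, assignmentSubgraph_adj] at hw ⊢
  rcases hw with ⟨-, (⟨hhs, -⟩ | ⟨hw, rfl⟩)⟩
  · exact absurd hhs hh
  · exact ⟨hw, rfl⟩

end SimpleGraph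

theorem le_pred_mul_of_le_succ_mul {a h k m n : ℕ} (hm : m ≤ (k + 1) * n) (hsize : a + 2 * h ≤ m)
    (hn : n ≤ h) : a ≤ (k - 1) * n := by
  rcases k with _ | j
  · omega
  · have : (j + 1 + 1) * n = j * n + 2 * n := by ring
    simp only [add_tsub_cancel_right]
    omega

theorem star_assignment_subgraph_general (k : ℕ) (α : ℝ) (hα : 0 < α) (m : ℕ)
    (V : Type) [Fintype V] [DecidableEq V] (B : SimpleGraph V) (Hs Us : Finset V)
    (hdisj : Disjoint Hs Us) (hcover : Hs ∪ Us = univ)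
    (hbip : ∀ u v : V, B.Adj u v → (u ∈ Hs ↔ v ∈ Us))
    (hdeg : ∀ u ∈ Us,
      (1 / ((k : ℝ) + 1) + α / 4) * m ≤ ((univ.filter fun w => B.Adj u w).card : ℝ))
    (hsize : Us.card + 2 * Hs.card ≤ m) :
    ∃ B' : SimpleGraph V, B' ≤ B ∧
      (∀ u ∈ Us, (univ.filter fun w => B'.Adj u w).card = 1) ∧
      (∀ h ∈ Hs, (univ.filter fun w => B'.Adj h w).card ≤ k - 1) := by
  rcases isEmpty_or_nonempty V with hV | _
  · exact ⟨B, le_rfl, fun u => isEmptyElim u, fun h => isEmptyElim h⟩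
  have hUs : ∀ u ∈ Us, ∀ v ∈ Us, ¬ B.Adj u v := fun u hu v hv huv =>
    disjoint_left.mp hdisj ((hbip u v huv).mpr hv) hu
  have hnbr : ∀ u ∈ Us, ({w | B.Adj u w} : Finset V) ⊆ Hs := fun u hu w hw =>
    (mem_union.mp (hcover ▸ mem_univ w)).resolve_right (hUs u hu w · (mem_filter.mp hw).2)
  have hm : ∀ u ∈ Us, m ≤ (k + 1) * #{w | B.Adj u w} := fun u hu => by
    have hk : (0 : ℝ) < k + 1 := by positivity
    have : (m : ℝ) / (k + 1) ≤ #{w | B.Adj u w} :=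
      calc (m : ℝ) / (k + 1) ≤ (1 / ((k : ℝ) + 1) + α / 4) * m := by
            rw [add_mul, one_div_mul_eq_div]; exact le_add_of_nonneg_right (by positivity)
        _ ≤ _ := hdeg u hu
    exact_mod_cast (div_le_iff₀' hk).mp this
  obtain ⟨f, hfB, hfc⟩ := exists_mapsTo_card_fiber_le (t := fun u => {w | B.Adj u w}) Us
    fun u hu => le_pred_mul_of_le_succ_mul (hm u hu) hsize (card_le_card (hnbr u hu))
  have hfB' : ∀ u ∈ Us, B.Adj u (f u) := fun u hu => (mem_filter.mp (hfB u hu)).2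
  exact ⟨B.assignmentSubgraph Us f, inf_le_left,
    fun u hu => SimpleGraph.card_assignmentSubgraph_adj_of_mem hUs hfB' hu,
    fun h hh => (SimpleGraph.card_assignmentSubgraph_adj_le_of_notMem
      (disjoint_left.mp hdisj hh)).trans (hfc h)⟩

theorem star_assignment_subgraph (k : ℕ) (hk : 2 ≤ k) (α : ℝ) (hα : 0 < α)
    (m : ℕ) (hmα : 4 / α < (m : ℝ))
    (V : Type) [Fintype V] [DecidableEq V] (B : SimpleGraph V) (Hs Us : Finset V)
    (hdisj : Disjoint Hs Us) (hcover : Hs ∪ Us = univ)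
    (hbip : ∀ u v : V, B.Adj u v → (u ∈ Hs ↔ v ∈ Us))
    (hdeg : ∀ u ∈ Us,
      (1 / ((k : ℝ) + 1) + α / 4) * m ≤ ((univ.filter fun w => B.Adj u w).card : ℝ))
    (hsize : Us.card + 2 * Hs.card ≤ m) :
    ∃ B' : SimpleGraph V, B' ≤ B ∧
      (∀ u ∈ Us, (univ.filter fun w => B'.Adj u w).card = 1) ∧
      (∀ h ∈ Hs, (univ.filter fun w => B'.Adj h w).card ≤ k - 1) :=
  star_assignment_subgraph_general k α hα m V B Hs Us hdisj hcover hbip hdeg hsize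
end

section
/- Let X and Y be finite sets, let X = X₁ ∪ X₂ be a partition of X into two disjoint parts, let q₁, q₂ ∈ [0,1], and let λ be a probability distribution over injections φ : X → Y. Suppose that the marginal distribution of the restriction φ|_{X₁} is q₁-vertex-spread, and that for every injection ψ : X₁ → Y occurring with positive probability, the conditional distribution of φ|_{X₂} given φ|_{X₁} = ψ is q₂-vertex-spread. Then λ is max(q₁, q₂)-vertex-spread. -/
open scoped ENNReal

/-!
Split the constraints `φ (x i) = y i` into the `m` with `x i ∈ X₁` and the `n` others. The
former only depend on the restriction `φ|_{X₁}`, so they cut out a union of fibres of that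
restriction, of total mass at most `q₁ ^ m` by the marginal hypothesis. On every fibre of
positive mass the latter hold with conditional probability at most `q₂ ^ n`; summing over
the fibres gives `q₁ ^ m * q₂ ^ n ≤ max q₁ q₂ ^ (m + n)`.
-/

namespace PMF
variable {α β : Type*} (p : PMF α) (r : α → β)

theorem toOuterMeasure_eq_tsum_inter_preimage_singleton (s : Set α) :
    p.toOuterMeasure s = ∑' b, p.toOuterMeasure (s ∩ r ⁻¹' {b}) := by
  classical
  simp only [toOuterMeasure_apply]
  rw [ENNReal.tsum_comm]
  refine tsum_congr fun a => ?_
  rw [← tsum_pi_single (r a) (s.indicator p a)]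
  refine tsum_congr fun b => ?_
  by_cases hb : b = r a <;> simp [Set.indicator_apply, hb, eq_comm]

theorem toOuterMeasure_preimage_inter_le_of_forall_fiber (B : Set β) (s : Set α) (c : ℝ≥0∞)
    (h : ∀ a, 0 < p.toOuterMeasure (r ⁻¹' {r a}) →
      p.toOuterMeasure (r ⁻¹' {r a} ∩ s) ≤ c * p.toOuterMeasure (r ⁻¹' {r a})) :
    p.toOuterMeasure (r ⁻¹' B ∩ s) ≤ c * p.toOuterMeasure (r ⁻¹' B) := by
  rw [toOuterMeasure_eq_tsum_inter_preimage_singleton p r,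
    toOuterMeasure_eq_tsum_inter_preimage_singleton p r (r ⁻¹' B), ← ENNReal.tsum_mul_left]
  refine ENNReal.tsum_le_tsum fun b => ?_
  by_cases hb : b ∈ B
  · have hsub : r ⁻¹' {b} ⊆ r ⁻¹' B := Set.preimage_mono (Set.singleton_subset_iff.2 hb)
    rw [Set.inter_eq_right.2 hsub, Set.inter_right_comm, Set.inter_eq_right.2 hsub]
    rcases eq_zero_or_pos (p.toOuterMeasure (r ⁻¹' {b})) with h0 | hpos
    · rw [h0, mul_zero]
      exact (p.toOuterMeasure.mono Set.inter_subset_left).trans h0.le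
    · obtain ⟨a, rfl⟩ : ∃ a, r a = b := by
        by_contra! hne
        simp [Set.preimage_singleton_eq_empty.2 (by simpa [Set.mem_range] using hne)] at hpos
      exact h a hpos
  · have hempty : r ⁻¹' B ∩ s ∩ r ⁻¹' {b} = ∅ := by
      ext a
      simp only [Set.mem_inter_iff, Set.mem_preimage, Set.mem_singleton_iff]
      grind
    simp [hempty]
end PMF

theorem Fin.exists_embedding_forall_iff {k : ℕ} (P : Fin k → Prop) :
    ∃ e : Fin (Nat.card {i // P i}) ↪ Fin k,
      ∀ Q : Fin k → Prop, (∀ j, Q (e j)) ↔ ∀ i, P i → Q i := by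
  refine ⟨(Finite.equivFin _).symm.toEmbedding.trans (Function.Embedding.subtype P),
    fun Q => ?_⟩
  simp only [Function.Embedding.trans_apply, Equiv.coe_toEmbedding,
    Function.Embedding.subtype_apply]
  rw [(Finite.equivFin _).symm.forall_congr_right (q := fun i : {i // P i} => Q i)]
  exact Subtype.forall

theorem Fin.exists_embeddings_forall_iff_and_not {k : ℕ} (P : Fin k → Prop) :
    ∃ (m n : ℕ) (e₁ : Fin m ↪ Fin k) (e₂ : Fin n ↪ Fin k), m + n = k ∧
      (∀ Q : Fin k → Prop, (∀ j, Q (e₁ j)) ↔ ∀ i, P i → Q i) ∧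
      (∀ Q : Fin k → Prop, (∀ j, Q (e₂ j)) ↔ ∀ i, ¬P i → Q i) := by
  classical
  obtain ⟨e₁, he₁⟩ := exists_embedding_forall_iff P
  obtain ⟨e₂, he₂⟩ := exists_embedding_forall_iff fun i => ¬P i
  refine ⟨_, _, e₁, e₂, ?_, he₁, he₂⟩
  rw [← Nat.card_sum, Nat.card_congr (Equiv.sumCompl _), Nat.card_eq_fintype_card,
    Fintype.card_fin]

theorem pow_mul_pow_le_max_pow {a b : ℝ} (ha : 0 ≤ a) (hb : 0 ≤ b) (m n : ℕ) :
    a ^ m * b ^ n ≤ max a b ^ (m + n) := by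
  rw [pow_add]
  gcongr
  exacts [le_max_left a b, le_max_right a b]

theorem vertex_spread_composition_general (X Y : Type)
    (X₁ : Finset X) (q₁ q₂ : ℝ)
    (hq₁0 : 0 ≤ q₁) (hq₂0 : 0 ≤ q₂)
    (lam : PMF {f : X → Y // Function.Injective f})
    -- the marginal of `φ|_{X₁}` is `q₁`-vertex-spread
    (hmarginal : ∀ (k : ℕ) (x : Fin k → X) (y : Fin k → Y),
      Function.Injective x → Function.Injective y → (∀ i, x i ∈ X₁) →
      lam.toOuterMeasure {f | ∀ i, f.1 (x i) = y i} ≤ ENNReal.ofReal (q₁ ^ k))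
    -- for every restriction `ψ` to `X₁` occurring with positive probability,
    -- the conditional distribution of `φ|_{X₂}` given `φ|_{X₁} = ψ` is
    -- `q₂`-vertex-spread (`X₂ = X \ X₁`)
    (hcond : ∀ ψ : X → Y,
      0 < lam.toOuterMeasure {f | ∀ a ∈ X₁, f.1 a = ψ a} →
      ∀ (k : ℕ) (x : Fin k → X) (y : Fin k → Y),
        Function.Injective x → Function.Injective y → (∀ i, x i ∉ X₁) →
        lam.toOuterMeasure {f | (∀ a ∈ X₁, f.1 a = ψ a) ∧ ∀ i, f.1 (x i) = y i} ≤
          ENNReal.ofReal (q₂ ^ k) *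
            lam.toOuterMeasure {f | ∀ a ∈ X₁, f.1 a = ψ a}) :
    -- `λ` is `max q₁ q₂`-vertex-spread
    ∀ (k : ℕ) (x : Fin k → X) (y : Fin k → Y),
      Function.Injective x → Function.Injective y →
      lam.toOuterMeasure {f | ∀ i, f.1 (x i) = y i} ≤
        ENNReal.ofReal (max q₁ q₂ ^ k) := by
  intro k x y hx hy
  obtain ⟨m, n, e₁, e₂, rfl, he₁, he₂⟩ := Fin.exists_embeddings_forall_iff_and_not (x · ∈ X₁)
  let r : {f : X → Y // Function.Injective f} → (X₁ → Y) := fun f => X₁.restrict f.1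
  let B : Set (X₁ → Y) := {ρ | ∀ i (hi : x i ∈ X₁), ρ ⟨x i, hi⟩ = y i}
  let E₂ : Set {f : X → Y // Function.Injective f} := {f | ∀ i, x i ∉ X₁ → f.1 (x i) = y i}
  have hE : {f | ∀ i, f.1 (x i) = y i} = r ⁻¹' B ∩ E₂ := by
    ext f
    simp only [Set.mem_ofPred_eq, Set.mem_inter_iff, Set.mem_preimage, B, E₂, r, Finset.restrict]
    grind
  have hB : lam.toOuterMeasure (r ⁻¹' B) ≤ ENNReal.ofReal (q₁ ^ m) := by
    convert hmarginal m (x ∘ e₁) (y ∘ e₁) (hx.comp e₁.injective) (hy.comp e₁.injective)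
      ((he₁ _).2 fun i hi => hi) using 2
    exact Set.ext fun f => (he₁ fun i => f.1 (x i) = y i).symm
  have hfiber : ∀ f, 0 < lam.toOuterMeasure (r ⁻¹' {r f}) →
      lam.toOuterMeasure (r ⁻¹' {r f} ∩ E₂) ≤
        ENNReal.ofReal (q₂ ^ n) * lam.toOuterMeasure (r ⁻¹' {r f}) := by
    intro f hf
    have hr : r ⁻¹' {r f} = {g | ∀ a ∈ X₁, g.1 a = f.1 a} := by
      ext g
      simp [r, funext_iff]
    rw [hr] at hf ⊢
    convert hcond f.1 hf n (x ∘ e₂) (y ∘ e₂) (hx.comp e₂.injective) (hy.comp e₂.injective)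
      ((he₂ _).2 fun i hi => hi) using 2
    exact Set.ext fun g => and_congr_right' (he₂ fun i => g.1 (x i) = y i).symm
  calc lam.toOuterMeasure {f | ∀ i, f.1 (x i) = y i}
      ≤ ENNReal.ofReal (q₂ ^ n) * lam.toOuterMeasure (r ⁻¹' B) :=
        hE ▸ lam.toOuterMeasure_preimage_inter_le_of_forall_fiber r B E₂ _ hfiber
    _ ≤ ENNReal.ofReal (q₂ ^ n) * ENNReal.ofReal (q₁ ^ m) := by gcongr
    _ ≤ ENNReal.ofReal (max q₁ q₂ ^ (m + n)) := by
        rw [← ENNReal.ofReal_mul (by positivity), mul_comm]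
        exact ENNReal.ofReal_le_ofReal (pow_mul_pow_le_max_pow hq₁0 hq₂0 m n)

theorem vertex_spread_composition (X Y : Type) [Fintype X] [Fintype Y]
    [DecidableEq X] [DecidableEq Y]
    (X₁ : Finset X) (q₁ q₂ : ℝ)
    (hq₁0 : 0 ≤ q₁) (hq₁1 : q₁ ≤ 1) (hq₂0 : 0 ≤ q₂) (hq₂1 : q₂ ≤ 1)
    (lam : PMF {f : X → Y // Function.Injective f})
    -- the marginal of `φ|_{X₁}` is `q₁`-vertex-spread
    (hmarginal : ∀ (k : ℕ) (x : Fin k → X) (y : Fin k → Y),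
      Function.Injective x → Function.Injective y → (∀ i, x i ∈ X₁) →
      lam.toOuterMeasure {f | ∀ i, f.1 (x i) = y i} ≤ ENNReal.ofReal (q₁ ^ k))
    -- for every restriction `ψ` to `X₁` occurring with positive probability,
    -- the conditional distribution of `φ|_{X₂}` given `φ|_{X₁} = ψ` is
    -- `q₂`-vertex-spread (`X₂ = X \ X₁`)
    (hcond : ∀ ψ : X → Y,
      0 < lam.toOuterMeasure {f | ∀ a ∈ X₁, f.1 a = ψ a} →
      ∀ (k : ℕ) (x : Fin k → X) (y : Fin k → Y),
        Function.Injective x → Function.Injective y → (∀ i, x i ∉ X₁) →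
        lam.toOuterMeasure {f | (∀ a ∈ X₁, f.1 a = ψ a) ∧ ∀ i, f.1 (x i) = y i} ≤
          ENNReal.ofReal (q₂ ^ k) *
            lam.toOuterMeasure {f | ∀ a ∈ X₁, f.1 a = ψ a}) :
    -- `λ` is `max q₁ q₂`-vertex-spread
    ∀ (k : ℕ) (x : Fin k → X) (y : Fin k → Y),
      Function.Injective x → Function.Injective y →
      lam.toOuterMeasure {f | ∀ i, f.1 (x i) = y i} ≤
        ENNReal.ofReal (max q₁ q₂ ^ k) :=
  vertex_spread_composition_general X Y X₁ q₁ q₂ hq₁0 hq₂0 lam hmarginal hcond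
end
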